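/- There is an absolute constant A > 0 such that for every real N > 1 and every ε with 0 < ε < 1, there exists a real univariate polynomial p of degree at most A · N² · log₂(2/ε) satisfying |sign(t) − p(t)| ≤ ε for all t ∈ [−N, −1] ∪ [1, N]. -/

import Mathlib

/-!
Compose the degree-`n` Bernstein polynomial of the `±1` step at `1/2` with the affine map
`[-N, N] → [0, 1]`. At a point `x` with `|x - 1/2| ≥ 1/(2N)` its error is twice a binomial tail
`P(Bin(n, x) on the wrong side of n/2)`, and Chernoff's bound, with the moment estimate
`x e^{u(1-x)} + (1-x) e^{-ux} ≤ 1 + u²/4` for `|u| ≤ 1`, bounds that tail by `exp (-n/(4N²))`.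
Hence `n = ⌈4 N² log (2/ε)⌉` suffices.
-/

open Polynomial Finset Real

theorem bernsteinPolynomial_natDegree_le {R : Type*} [CommRing R] (n ν : ℕ) :
    (bernsteinPolynomial R n ν).natDegree ≤ n := by
  by_cases hν : ν ≤ n
  · unfold bernsteinPolynomial
    compute_degree
    all_goals omega
  · simp [bernsteinPolynomial.eq_zero_of_lt R (not_le.mp hν)]

theorem bernsteinPolynomial_eval (n ν : ℕ) (x : ℝ) :
    (bernsteinPolynomial ℝ n ν).eval x = n.choose ν * x ^ ν * (1 - x) ^ (n - ν) := by
  simp [bernsteinPolynomial]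

theorem bernsteinPolynomial_eval_nonneg (n ν : ℕ) {x : ℝ} (hx0 : 0 ≤ x) (hx1 : x ≤ 1) :
    0 ≤ (bernsteinPolynomial ℝ n ν).eval x := by
  rw [bernsteinPolynomial_eval]
  have : 0 ≤ 1 - x := by linarith
  positivity

theorem bernoulli_exp_moment_le {x u : ℝ} (hx0 : 0 ≤ x) (hx1 : x ≤ 1) (hu : |u| ≤ 1) :
    x * exp (u * (1 - x)) + (1 - x) * exp (-(u * x)) ≤ 1 + u ^ 2 / 4 := by
  have habs : |u * (1 - x)| ≤ 1 ∧ |-(u * x)| ≤ 1 := by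
    rw [abs_neg, abs_mul, abs_mul]
    constructor <;> apply mul_le_one₀ hu (abs_nonneg _) <;> rw [abs_le] <;> constructor <;> linarith
  have e₁ := (abs_le.mp (abs_exp_sub_one_sub_id_le habs.1)).2
  have e₂ := (abs_le.mp (abs_exp_sub_one_sub_id_le habs.2)).2
  -- the quadratic bounds add up to `1 + u² x (1 - x)`
  nlinarith [mul_le_mul_of_nonneg_left e₁ hx0, mul_le_mul_of_nonneg_left e₂ (sub_nonneg.mpr hx1),
    mul_nonneg (sq_nonneg u) (sq_nonneg (2 * x - 1))]

theorem sum_bernsteinPolynomial_eval_mul_exp (n : ℕ) (x u : ℝ) :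
    ∑ k ∈ range (n + 1), (bernsteinPolynomial ℝ n k).eval x * exp (u * (k - n * x)) =
      (x * exp (u * (1 - x)) + (1 - x) * exp (-(u * x))) ^ n := by
  rw [add_pow]
  refine sum_congr rfl fun k hk => ?_
  have hk : k ≤ n := Nat.lt_succ_iff.mp (mem_range.mp hk)
  have hexp : exp (u * (k - n * x)) = exp (u * (1 - x)) ^ k * exp (-(u * x)) ^ (n - k) := by
    rw [← exp_nat_mul, ← exp_nat_mul, ← exp_add, Nat.cast_sub hk]
    ring_nf
  rw [bernsteinPolynomial_eval, hexp, mul_pow, mul_pow]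
  ring

theorem sum_bernsteinPolynomial_eval_mul_exp_le (n : ℕ) {x u : ℝ} (hx0 : 0 ≤ x) (hx1 : x ≤ 1)
    (hu : |u| ≤ 1) :
    ∑ k ∈ range (n + 1), (bernsteinPolynomial ℝ n k).eval x * exp (u * (k - n * x)) ≤
      exp (n * u ^ 2 / 4) := by
  rw [sum_bernsteinPolynomial_eval_mul_exp]
  calc (x * exp (u * (1 - x)) + (1 - x) * exp (-(u * x))) ^ n
      ≤ (1 + u ^ 2 / 4) ^ n := by
        have : 0 ≤ 1 - x := by linarith
        exact pow_le_pow_left₀ (by positivity) (bernoulli_exp_moment_le hx0 hx1 hu) n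
    _ ≤ exp (u ^ 2 / 4) ^ n := by gcongr; linarith [add_one_le_exp (u ^ 2 / 4)]
    _ = exp (n * u ^ 2 / 4) := by rw [← exp_nat_mul]; ring_nf

-- Chernoff's bound for the binomial distribution.
theorem sum_bernsteinPolynomial_eval_le_exp {n : ℕ} {x u a : ℝ} (hx0 : 0 ≤ x) (hx1 : x ≤ 1)
    (hu : |u| ≤ 1) {S : Finset ℕ} (hS : S ⊆ range (n + 1))
    (ha : ∀ k ∈ S, a ≤ u * (k - n * x)) :
    ∑ k ∈ S, (bernsteinPolynomial ℝ n k).eval x ≤ exp (n * u ^ 2 / 4 - a) := by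
  have hb := fun k => bernsteinPolynomial_eval_nonneg n k hx0 hx1
  calc ∑ k ∈ S, (bernsteinPolynomial ℝ n k).eval x
      ≤ ∑ k ∈ S, (bernsteinPolynomial ℝ n k).eval x * exp (u * (k - n * x) - a) := by
        refine sum_le_sum fun k hk => le_mul_of_one_le_right (hb k) ?_
        exact one_le_exp (sub_nonneg.mpr (ha k hk))
    _ ≤ ∑ k ∈ range (n + 1), (bernsteinPolynomial ℝ n k).eval x * exp (u * (k - n * x) - a) :=
        sum_le_sum_of_subset_of_nonneg hS fun k _ _ => mul_nonneg (hb k) (exp_nonneg _)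
    _ = exp (-a) *
          ∑ k ∈ range (n + 1), (bernsteinPolynomial ℝ n k).eval x * exp (u * (k - n * x)) := by
        rw [mul_sum]
        refine sum_congr rfl fun k _ => ?_
        rw [sub_eq_add_neg, exp_add]
        ring
    _ ≤ exp (-a) * exp (n * u ^ 2 / 4) :=
        mul_le_mul_of_nonneg_left (sum_bernsteinPolynomial_eval_mul_exp_le n hx0 hx1 hu)
          (exp_nonneg _)
    _ = exp (n * u ^ 2 / 4 - a) := by rw [← exp_add]; ring_nf

theorem sum_bernsteinPolynomial_eval_upper_le {n : ℕ} {x η : ℝ} (hx0 : 0 ≤ x) (hη : 0 ≤ η)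
    (hxη : x + η ≤ 1 / 2) :
    ∑ k ∈ range (n + 1) with n ≤ 2 * k, (bernsteinPolynomial ℝ n k).eval x ≤
      exp (-(n * η ^ 2)) := by
  have hu : |2 * η| ≤ 1 := by rw [abs_le]; constructor <;> linarith
  convert sum_bernsteinPolynomial_eval_le_exp hx0 (by linarith) hu (a := 2 * n * η ^ 2)
    (filter_subset _ _) fun k hk => ?_ using 2
  · ring
  · have hk : (n : ℝ) ≤ 2 * k := by exact_mod_cast (mem_filter.mp hk).2
    nlinarith [mul_le_mul_of_nonneg_left hxη (Nat.cast_nonneg n : (0 : ℝ) ≤ n)]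

theorem sum_bernsteinPolynomial_eval_lower_le {n : ℕ} {x η : ℝ} (hx1 : x ≤ 1) (hη : 0 ≤ η)
    (hxη : 1 / 2 + η ≤ x) :
    ∑ k ∈ range (n + 1) with 2 * k < n, (bernsteinPolynomial ℝ n k).eval x ≤
      exp (-(n * η ^ 2)) := by
  have hu : |-(2 * η)| ≤ 1 := by rw [abs_le]; constructor <;> linarith
  convert sum_bernsteinPolynomial_eval_le_exp (by linarith) hx1 hu (a := 2 * n * η ^ 2)
    (filter_subset _ _) fun k hk => ?_ using 2
  · ring
  · have hk : 2 * (k : ℝ) < n := by exact_mod_cast (mem_filter.mp hk).2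
    nlinarith [mul_le_mul_of_nonneg_left hxη (Nat.cast_nonneg n : (0 : ℝ) ≤ n)]

-- The Bernstein polynomial of the step function equal to `-1` on `[0, 1/2)` and `1` on `[1/2, 1]`.
noncomputable def signBernstein (n : ℕ) : ℝ[X] :=
  ∑ k ∈ range (n + 1) with n ≤ 2 * k, bernsteinPolynomial ℝ n k -
    ∑ k ∈ range (n + 1) with 2 * k < n, bernsteinPolynomial ℝ n k

theorem signBernstein_natDegree_le (n : ℕ) : (signBernstein n).natDegree ≤ n :=
  (natDegree_sub_le _ _).trans <| max_le
    (natDegree_sum_le_of_forall_le _ _ fun k _ => bernsteinPolynomial_natDegree_le n k)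
    (natDegree_sum_le_of_forall_le _ _ fun k _ => bernsteinPolynomial_natDegree_le n k)

theorem sum_bernsteinPolynomial_eval_upper_add_lower (n : ℕ) (x : ℝ) :
    ∑ k ∈ range (n + 1) with n ≤ 2 * k, (bernsteinPolynomial ℝ n k).eval x +
      ∑ k ∈ range (n + 1) with 2 * k < n, (bernsteinPolynomial ℝ n k).eval x = 1 := by
  simp_rw [← not_le, sum_filter_add_sum_filter_not, ← eval_finsetSum, bernsteinPolynomial.sum,
    eval_one]

theorem abs_neg_one_sub_eval_signBernstein_le (n : ℕ) {x η : ℝ} (hx0 : 0 ≤ x) (hη : 0 ≤ η)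
    (hxη : x + η ≤ 1 / 2) : |-1 - (signBernstein n).eval x| ≤ 2 * exp (-(n * η ^ 2)) := by
  have hsum := sum_bernsteinPolynomial_eval_upper_add_lower n x
  have hupper := sum_bernsteinPolynomial_eval_upper_le (n := n) hx0 hη hxη
  have hnonneg : 0 ≤ ∑ k ∈ range (n + 1) with n ≤ 2 * k, (bernsteinPolynomial ℝ n k).eval x :=
    sum_nonneg fun k _ => bernsteinPolynomial_eval_nonneg n k hx0 (by linarith)
  rw [signBernstein, eval_sub, eval_finsetSum, eval_finsetSum, abs_le]
  constructor <;> linarith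

theorem abs_one_sub_eval_signBernstein_le (n : ℕ) {x η : ℝ} (hx1 : x ≤ 1) (hη : 0 ≤ η)
    (hxη : 1 / 2 + η ≤ x) : |1 - (signBernstein n).eval x| ≤ 2 * exp (-(n * η ^ 2)) := by
  have hsum := sum_bernsteinPolynomial_eval_upper_add_lower n x
  have hlower := sum_bernsteinPolynomial_eval_lower_le (n := n) hx1 hη hxη
  have hnonneg : 0 ≤ ∑ k ∈ range (n + 1) with 2 * k < n, (bernsteinPolynomial ℝ n k).eval x :=
    sum_nonneg fun k _ => bernsteinPolynomial_eval_nonneg n k (by linarith) hx1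
  rw [signBernstein, eval_sub, eval_finsetSum, eval_finsetSum, abs_le]
  constructor <;> linarith

theorem two_mul_exp_neg_le_of_log_le {ε y : ℝ} (hε : 0 < ε) (h : log (2 / ε) ≤ y) :
    2 * exp (-y) ≤ ε := by
  calc 2 * exp (-y) ≤ 2 * exp (-log (2 / ε)) := by gcongr
    _ = ε := by rw [exp_neg, exp_log (by positivity)]; field_simp

theorem natCeil_four_mul_mul_log_le {c y : ℝ} (hc : 1 ≤ c) (hy : 2 ≤ y) :
    (⌈4 * c * log y⌉₊ : ℝ) ≤ 5 * c * logb 2 y := by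
  have hlogb : 1 ≤ logb 2 y := by
    rw [le_logb_iff_rpow_le one_lt_two (by linarith)]
    simpa using hy
  have hlog : log y ≤ logb 2 y := by
    rw [← log_div_log]
    exact le_div_self (log_nonneg (by linarith)) (log_pos one_lt_two)
      (by linarith [log_two_lt_d9])
  calc (⌈4 * c * log y⌉₊ : ℝ) ≤ 4 * c * log y + 1 :=
        (Nat.ceil_lt_add_one (by have := log_nonneg (by linarith : (1 : ℝ) ≤ y); positivity)).le
    _ ≤ 4 * c * logb 2 y + c * logb 2 y := by gcongr; nlinarith
    _ = 5 * c * logb 2 y := by ring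

theorem stmt_3 : ∃ A : ℝ, 0 < A ∧ ∀ N : ℝ, 1 < N → ∀ ε : ℝ, 0 < ε → ε < 1 →
    ∃ p : Polynomial ℝ, (p.natDegree : ℝ) ≤ A * N ^ 2 * Real.logb 2 (2 / ε) ∧
      ∀ t : ℝ, t ∈ Set.Icc (-N) (-1) ∪ Set.Icc 1 N →
        |Real.sign t - Polynomial.eval t p| ≤ ε := by
  refine ⟨5, by norm_num, fun N hN ε hε0 hε1 => ?_⟩
  set n := ⌈4 * N ^ 2 * log (2 / ε)⌉₊
  have hN0 : 0 < N := by linarith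
  have h2ε : 2 ≤ 2 / ε := by rw [le_div_iff₀ hε0]; linarith
  have herr : 2 * exp (-(n * (2 * N)⁻¹ ^ 2)) ≤ ε := by
    refine two_mul_exp_neg_le_of_log_le hε0 ?_
    have := Nat.le_ceil (4 * N ^ 2 * log (2 / ε))
    rw [inv_pow, ← div_eq_mul_inv, le_div_iff₀ (by positivity)]
    linarith
  refine ⟨(signBernstein n).comp (C (2 * N)⁻¹ * (X + C N)), ?_, ?_⟩
  · have hlin : (C (2 * N)⁻¹ * (X + C N)).natDegree ≤ 1 := by compute_degree
    have hdeg : ((signBernstein n).comp (C (2 * N)⁻¹ * (X + C N))).natDegree ≤ n :=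
      natDegree_comp_le.trans (by simpa using Nat.mul_le_mul (signBernstein_natDegree_le n) hlin)
    calc _ ≤ (n : ℝ) := by exact_mod_cast hdeg
      _ ≤ 5 * N ^ 2 * logb 2 (2 / ε) := natCeil_four_mul_mul_log_le (by nlinarith) h2ε
  · rintro t (⟨ht₁, ht₂⟩ | ⟨ht₁, ht₂⟩)
    · rw [Real.sign_of_neg (by linarith), eval_comp]
      refine (abs_neg_one_sub_eval_signBernstein_le n ?_ (by positivity) ?_).trans herr <;>
        simp only [eval_mul, eval_C, eval_add, eval_X] <;> field_simp <;> linarith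
    · rw [Real.sign_of_pos (by linarith), eval_comp]
      refine (abs_one_sub_eval_signBernstein_le n ?_ (by positivity) ?_).trans herr <;>
        simp only [eval_mul, eval_C, eval_add, eval_X] <;> field_simp <;> linarith
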